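/- arXiv:1811.02993 — 6 statements merged into one kernel-verified Lean document; each statement's English description precedes it below -/
import Mathlib

section
/- Let Γ be a countable discrete group, λ its left regular representation on ℓ²(Γ), and let V ⊆ ℓ²(Γ) be a closed left-invariant subspace with orthogonal projection P. Let p = P δ_e ∈ ℓ²(Γ), where δ_e is the indicator of the identity. Then every f ∈ V satisfies f = Σ_{γ∈Γ} f(γ) λ(γ)p (convergence in ℓ²), and consequently V equals the closed linear span of {λ(γ)p : γ ∈ Γ}; i.e., every left-invariant subspace of ℓ²(Γ) is singly generated. -/
/-!
The orthogonal projection `P` onto a left-invariant subspace commutes with every `λ(γ)`, since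
`λ(γ)` is unitary and maps `V` onto `V`. Applying the continuous map `P` to the expansion
`f = Σ_γ f(γ) δ_γ = Σ_γ f(γ) λ(γ)δ_e` of `f ∈ V` therefore gives
`f = P f = Σ_γ f(γ) λ(γ) P δ_e = Σ_γ f(γ) λ(γ) p`.
-/

open Submodule

theorem Submodule.starProjection_linearIsometryEquiv_apply_of_map_eq {𝕜 E : Type*} [RCLike 𝕜]
    [NormedAddCommGroup E] [InnerProductSpace 𝕜 E] (K : Submodule 𝕜 E)
    [K.HasOrthogonalProjection] (U : E ≃ₗᵢ[𝕜] E)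
    (hK : K.map (U.toLinearEquiv : E →ₗ[𝕜] E) = K) (x : E) :
    K.starProjection (U x) = U (K.starProjection x) := by
  simpa only [hK, LinearIsometryEquiv.symm_apply_apply] using starProjection_map_apply U K (U x)

theorem Submodule.eq_topologicalClosure_span_of_hasSum {𝕜 E ι : Type*} [NormedField 𝕜]
    [NormedAddCommGroup E] [NormedSpace 𝕜 E] (V : Submodule 𝕜 E) (hV : IsClosed (V : Set E))
    (v : ι → E) (hv : ∀ i, v i ∈ V) (c : E → ι → 𝕜)
    (hsum : ∀ f ∈ V, HasSum (fun i => c f i • v i) f) :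
    V = (span 𝕜 (Set.range v)).topologicalClosure := by
  refine le_antisymm (fun f hf => mem_closure_of_tendsto (hsum f hf) ?_) ?_
  · exact Filter.Eventually.of_forall fun s =>
      sum_mem fun i _ => smul_mem _ _ (subset_span ⟨i, rfl⟩)
  · refine topologicalClosure_minimal _ ?_ hV
    rw [span_le]
    rintro _ ⟨i, rfl⟩
    exact hv i

section LeftRegular

variable {Γ : Type*} [Group Γ]
  {lam : Γ → (lp (fun _ : Γ => ℂ) 2 ≃ₗᵢ[ℂ] lp (fun _ : Γ => ℂ) 2)}

theorem leftRegular_apply_inv_apply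
    (hlam : ∀ (γ : Γ) (f : lp (fun _ : Γ => ℂ) 2) (γ' : Γ), lam γ f γ' = f (γ⁻¹ * γ'))
    (γ : Γ) (f : lp (fun _ : Γ => ℂ) 2) : lam γ (lam γ⁻¹ f) = f := by
  ext γ'
  simp [hlam]

theorem leftRegular_map_eq_of_invariant
    (hlam : ∀ (γ : Γ) (f : lp (fun _ : Γ => ℂ) 2) (γ' : Γ), lam γ f γ' = f (γ⁻¹ * γ'))
    (V : Submodule ℂ (lp (fun _ : Γ => ℂ) 2)) (hinv : ∀ γ : Γ, ∀ f ∈ V, lam γ f ∈ V) (γ : Γ) :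
    V.map ((lam γ).toLinearEquiv : _ →ₗ[ℂ] _) = V := by
  refine le_antisymm (map_le_iff_le_comap.mpr fun f hf => hinv γ f hf) fun f hf => ?_
  exact ⟨lam γ⁻¹ f, hinv γ⁻¹ f hf, leftRegular_apply_inv_apply hlam γ f⟩

theorem leftRegular_single_one [DecidableEq Γ]
    (hlam : ∀ (γ : Γ) (f : lp (fun _ : Γ => ℂ) 2) (γ' : Γ), lam γ f γ' = f (γ⁻¹ * γ'))
    (γ : Γ) (c : ℂ) : lam γ (lp.single 2 1 c) = lp.single 2 γ c := by
  ext γ'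
  rw [hlam]
  by_cases h : γ' = γ
  · simp [h]
  · rw [lp.single_apply_ne 2 γ _ h, lp.single_apply_ne 2 1 _ (by rw [Ne, inv_mul_eq_one]; exact Ne.symm h)]

theorem hasSum_smul_leftRegular_single_one [DecidableEq Γ]
    (hlam : ∀ (γ : Γ) (f : lp (fun _ : Γ => ℂ) 2) (γ' : Γ), lam γ f γ' = f (γ⁻¹ * γ'))
    (f : lp (fun _ : Γ => ℂ) 2) :
    HasSum (fun γ => f γ • lam γ (lp.single 2 1 1)) f := by
  refine (lp.hasSum_single (by norm_num) f).congr_fun fun γ => ?_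
  rw [leftRegular_single_one hlam, ← lp.single_smul, smul_eq_mul, mul_one]

end LeftRegular

theorem stmt6_general (Γ : Type*) [Group Γ] [DecidableEq Γ]
    (lam : Γ → (lp (fun _ : Γ => ℂ) 2 ≃ₗᵢ[ℂ] lp (fun _ : Γ => ℂ) 2))
    (hlam : ∀ (γ : Γ) (f : lp (fun _ : Γ => ℂ) 2) (γ' : Γ), lam γ f γ' = f (γ⁻¹ * γ'))
    (V : Submodule ℂ (lp (fun _ : Γ => ℂ) 2))
    (hV : IsClosed (V : Set (lp (fun _ : Γ => ℂ) 2))) [CompleteSpace V]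
    (hinv : ∀ γ : Γ, ∀ f ∈ V, lam γ f ∈ V)
    (p : lp (fun _ : Γ => ℂ) 2)
    (hp : p = (Submodule.orthogonalProjectionOnto V (lp.single 2 (1 : Γ) (1 : ℂ)) : lp (fun _ : Γ => ℂ) 2)) :
    (∀ f ∈ V, HasSum (fun γ : Γ => f γ • lam γ p) f) ∧
    V = (Submodule.span ℂ (Set.range fun γ : Γ => lam γ p)).topologicalClosure := by
  rw [← starProjection_apply] at hp
  have hpV : p ∈ V := hp ▸ starProjection_apply_mem V _
  have hexpand : ∀ f ∈ V, HasSum (fun γ : Γ => f γ • lam γ p) f := by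
    intro f hf
    have h := V.starProjection.hasSum (hasSum_smul_leftRegular_single_one hlam f)
    rw [starProjection_eq_self_iff.mpr hf] at h
    refine h.congr_fun fun γ => ?_
    rw [map_smul, V.starProjection_linearIsometryEquiv_apply_of_map_eq (lam γ)
      (leftRegular_map_eq_of_invariant hlam V hinv γ), ← hp]
  exact ⟨hexpand, V.eq_topologicalClosure_span_of_hasSum hV _ (fun γ => hinv γ p hpV) _ hexpand⟩

/-- If `V ⊆ ℓ²(Γ)` is a closed left-invariant subspace with orthogonal
projection `P`, and `p = P δ_e`, then every `f ∈ V` satisfies `f = Σ_γ f(γ) λ(γ)p`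
(convergence in `ℓ²`), and `V` is the closed linear span of `{λ(γ)p : γ ∈ Γ}`; in particular
every left-invariant subspace is principal (singly generated). -/
theorem stmt6 (Γ : Type*) [Group Γ] [Countable Γ] [DecidableEq Γ]
    (lam : Γ → (lp (fun _ : Γ => ℂ) 2 ≃ₗᵢ[ℂ] lp (fun _ : Γ => ℂ) 2))
    (hlam : ∀ (γ : Γ) (f : lp (fun _ : Γ => ℂ) 2) (γ' : Γ), lam γ f γ' = f (γ⁻¹ * γ'))
    (V : Submodule ℂ (lp (fun _ : Γ => ℂ) 2))
    (hV : IsClosed (V : Set (lp (fun _ : Γ => ℂ) 2))) [CompleteSpace V]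
    (hinv : ∀ γ : Γ, ∀ f ∈ V, lam γ f ∈ V)
    (p : lp (fun _ : Γ => ℂ) 2)
    (hp : p = (Submodule.orthogonalProjectionOnto V (lp.single 2 (1 : Γ) (1 : ℂ)) : lp (fun _ : Γ => ℂ) 2)) :
    (∀ f ∈ V, HasSum (fun γ : Γ => f γ • lam γ p) f) ∧
    V = (Submodule.span ℂ (Set.range fun γ : Γ => lam γ p)).topologicalClosure :=
  stmt6_general Γ lam hlam V hV hinv p hp
end

section
/- Let Γ be a countable discrete group, λ its left regular representation, V ⊆ ℓ²(Γ) a closed left-invariant subspace with orthogonal projection P, and p = Pδ_e. Then the system {λ(γ)p}_{γ∈Γ} is a Parseval frame for V: for every f ∈ V, Σ_{γ∈Γ} |⟨f, λ(γ)p⟩|² = ‖f‖². -/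
open scoped InnerProductSpace ENNReal ComplexConjugate

/-! Since `V` is invariant under `λ(γ)⁻¹ = λ(γ⁻¹)` and `P` is self-adjoint, for `f ∈ V` we get
`⟪f, λ(γ) P δ_e⟫ = ⟪λ(γ⁻¹) f, P δ_e⟫ = ⟪λ(γ⁻¹) f, δ_e⟫ = conj (f γ)`, so the frame coefficients of `f`
are its own values and the Parseval identity is `‖f‖² = Σ_γ |f γ|²` in `ℓ²(Γ)`. -/

theorem lp.norm_sq_eq_tsum_norm_sq {ι : Type*} {E : ι → Type*} [∀ i, NormedAddCommGroup (E i)]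
    (f : lp E 2) : ‖f‖ ^ 2 = ∑' i, ‖f i‖ ^ 2 := by
  have h := lp.norm_rpow_eq_tsum (p := 2) (by norm_num) f
  rw [show (2 : ℝ≥0∞).toReal = ((2 : ℕ) : ℝ) by norm_num] at h
  simpa only [Real.rpow_natCast] using h

theorem Submodule.inner_map_orthogonalProjectionOnto {𝕜 E : Type*} [RCLike 𝕜]
    [NormedAddCommGroup E] [InnerProductSpace 𝕜 E] (K : Submodule 𝕜 E) [K.HasOrthogonalProjection]
    (U : E ≃ₗᵢ[𝕜] E) (hU : ∀ f ∈ K, U.symm f ∈ K) {f : E} (hf : f ∈ K) (x : E) :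
    ⟪f, U (K.orthogonalProjectionOnto x)⟫_𝕜 = ⟪U.symm f, x⟫_𝕜 := by
  rw [← U.symm_symm, ← U.symm.inner_map_eq_flip, U.symm_symm]
  exact K.inner_orthogonalProjectionOnto_eq_of_mem_left ⟨_, hU f hf⟩ x

section LeftRegular

variable {Γ : Type*} [Group Γ]
  {lam : Γ → (lp (fun _ : Γ => ℂ) 2 ≃ₗᵢ[ℂ] lp (fun _ : Γ => ℂ) 2)}
  (hlam : ∀ (γ : Γ) (f : lp (fun _ : Γ => ℂ) 2) (γ' : Γ), lam γ f γ' = f (γ⁻¹ * γ'))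
include hlam

theorem leftRegular_symm_eq (γ : Γ) : (lam γ).symm = lam γ⁻¹ := by
  refine LinearIsometryEquiv.ext fun f => (LinearIsometryEquiv.symm_apply_eq _).2 ?_
  ext γ'
  simp [hlam]

theorem leftRegular_inv_apply_one (γ : Γ) (f : lp (fun _ : Γ => ℂ) 2) : lam γ⁻¹ f 1 = f γ := by
  simp [hlam]

end LeftRegular

theorem stmt7_general (Γ : Type*) [Group Γ] [DecidableEq Γ]
    (lam : Γ → (lp (fun _ : Γ => ℂ) 2 ≃ₗᵢ[ℂ] lp (fun _ : Γ => ℂ) 2))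
    (hlam : ∀ (γ : Γ) (f : lp (fun _ : Γ => ℂ) 2) (γ' : Γ), lam γ f γ' = f (γ⁻¹ * γ'))
    (V : Submodule ℂ (lp (fun _ : Γ => ℂ) 2)) [CompleteSpace V]
    (hinv : ∀ γ : Γ, ∀ f ∈ V, lam γ f ∈ V)
    (p : lp (fun _ : Γ => ℂ) 2)
    (hp : p = (V.orthogonalProjectionOnto (lp.single 2 (1 : Γ) (1 : ℂ)) : lp (fun _ : Γ => ℂ) 2)) :
    ∀ f ∈ V, ∑' γ : Γ, ‖⟪f, lam γ p⟫_ℂ‖ ^ 2 = ‖f‖ ^ 2 := by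
  intro f hf
  have coeff (γ : Γ) : ⟪f, lam γ p⟫_ℂ = conj (f γ) := by
    have hsymm := leftRegular_symm_eq hlam γ
    have hVsymm : ∀ g ∈ V, (lam γ).symm g ∈ V := hsymm ▸ hinv γ⁻¹
    rw [hp, V.inner_map_orthogonalProjectionOnto _ hVsymm hf, lp.inner_single_right, hsymm,
      leftRegular_inv_apply_one hlam]
    simp
  simp only [coeff, RCLike.norm_conj, lp.norm_sq_eq_tsum_norm_sq]

/-- If `V ⊆ ℓ²(Γ)` is a closed left-invariant subspace with orthogonal
projection `P` and `p = P δ_e`, then `{λ(γ)p}_{γ∈Γ}` is a Parseval frame for `V`: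
`Σ_γ |⟨f, λ(γ)p⟩|² = ‖f‖²` for all `f ∈ V`. -/
theorem stmt7 (Γ : Type*) [Group Γ] [Countable Γ] [DecidableEq Γ]
    (lam : Γ → (lp (fun _ : Γ => ℂ) 2 ≃ₗᵢ[ℂ] lp (fun _ : Γ => ℂ) 2))
    (hlam : ∀ (γ : Γ) (f : lp (fun _ : Γ => ℂ) 2) (γ' : Γ), lam γ f γ' = f (γ⁻¹ * γ'))
    (V : Submodule ℂ (lp (fun _ : Γ => ℂ) 2))
    (hV : IsClosed (V : Set (lp (fun _ : Γ => ℂ) 2))) [CompleteSpace V]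
    (hinv : ∀ γ : Γ, ∀ f ∈ V, lam γ f ∈ V)
    (p : lp (fun _ : Γ => ℂ) 2)
    (hp : p = (V.orthogonalProjectionOnto (lp.single 2 (1 : Γ) (1 : ℂ)) : lp (fun _ : Γ => ℂ) 2)) :
    ∀ f ∈ V, ∑' γ : Γ, ‖⟪f, lam γ p⟫_ℂ‖ ^ 2 = ‖f‖ ^ 2 :=
  stmt7_general Γ lam hlam V hinv p hp
end

section
/- Let Γ be a countable discrete group, γ₁ ≠ γ₂ ∈ Γ, a, b ∈ ℂ \ {0}, and f = a δ_{γ₁} + b δ_{γ₂} ∈ ℓ²(Γ). Suppose h = γ₁⁻¹γ₂ has infinite order (no n ≥ 1 with hⁿ = e). If g ∈ ℓ²(Γ) satisfies a̅ g(γγ₁) + b̅ g(γγ₂) = 0 for all γ ∈ Γ, then g = 0. -/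
/-!
Put `h = γ₁⁻¹γ₂` and fix `γ₀`. Evaluating the relation at `γ₀hᵏγ₁⁻¹` gives
`conj a · g(γ₀hᵏ) + conj b · g(γ₀hᵏ⁺¹) = 0`, so `k ↦ g(γ₀hᵏ)` is a two-sided geometric
sequence with nonzero ratio `r = -conj a / conj b`. Since `h` has infinite order the points
`γ₀hᵏ` are distinct, so this sequence tends to `0` along the cofinite filter of `ℤ`, as every
`ℓ²` function does. But `‖r‖ᵏ ≥ 1` for all `k ≥ 0` or for all `k ≤ 0`, so `g(γ₀) = 0`.
-/

open Filter Topology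
open scoped ComplexConjugate ENNReal

lemma lp.tendsto_norm_cofinite_zero {α : Type*} {E : α → Type*}
    [∀ i, NormedAddCommGroup (E i)] {p : ℝ≥0∞} (hp : 0 < p.toReal) (f : lp E p) :
    Tendsto (fun i => ‖f i‖) cofinite (𝓝 0) := by
  have hpow : Tendsto (fun i => ‖f i‖ ^ p.toReal) cofinite (𝓝 0) :=
    ((lp.memℓp f).summable hp).tendsto_cofinite_zero
  have hroot : Tendsto (fun x : ℝ => x ^ p.toReal⁻¹) (𝓝 0) (𝓝 0) := by
    simpa [Real.zero_rpow (inv_pos.2 hp).ne'] using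
      (Real.continuousAt_rpow_const 0 p.toReal⁻¹ (Or.inr (inv_nonneg.2 hp.le))).tendsto
  refine (hroot.comp hpow).congr fun i => ?_
  exact Real.rpow_rpow_inv (norm_nonneg _) hp.ne'

lemma Int.infinite_setOf_one_le_zpow {K : Type*} [Semifield K] [LinearOrder K]
    [IsStrictOrderedRing K] {x : K} (hx : 0 < x) : {k : ℤ | 1 ≤ x ^ k}.Infinite := by
  rcases le_or_gt 1 x with hx1 | hx1
  · refine (Set.Ici_infinite (0 : ℤ)).mono fun k (hk : 0 ≤ k) => ?_
    exact one_le_zpow₀ hx1 hk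
  · refine (Set.Iic_infinite (0 : ℤ)).mono fun k (hk : k ≤ 0) => ?_
    exact one_le_zpow_of_nonpos₀ hx hx1.le hk

section NormedField

variable {𝕜 : Type*} [NormedField 𝕜]

lemma eq_zero_of_tendsto_norm_zpow_mul {r c : 𝕜} (hr : r ≠ 0)
    (h : Tendsto (fun k : ℤ => ‖r ^ k * c‖) cofinite (𝓝 0)) : c = 0 := by
  by_contra hc
  have hsmall : {k : ℤ | ¬ ‖r ^ k * c‖ < ‖c‖}.Finite :=
    eventually_cofinite.1 (h.eventually_lt_const (norm_pos_iff.2 hc))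
  refine Int.infinite_setOf_one_le_zpow (norm_pos_iff.2 hr) (hsmall.subset fun k hk => ?_)
  rw [Set.mem_ofPred_eq, norm_mul, norm_zpow, not_lt]
  exact le_mul_of_one_le_left (norm_nonneg c) hk

lemma eq_zpow_mul_of_forall_add_one {r : 𝕜} (hr : r ≠ 0) {u : ℤ → 𝕜}
    (h : ∀ k, u (k + 1) = r * u k) (k : ℤ) : u k = r ^ k * u 0 := by
  induction k using Int.induction_on with
  | zero => simp
  | succ k ih => rw [h, ih, zpow_add_one₀ hr]; ring
  | pred k ih =>
    have hk := h (-k - 1)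
    rw [sub_add_cancel, ih] at hk
    apply mul_left_cancel₀ hr
    rw [← hk, zpow_sub_one₀ hr]
    field_simp

lemma eq_zero_of_tendsto_norm_of_mul_add_mul_add_one {a b : 𝕜} (ha : a ≠ 0) (hb : b ≠ 0)
    {u : ℤ → 𝕜} (hrec : ∀ k, a * u k + b * u (k + 1) = 0)
    (hu : Tendsto (fun k => ‖u k‖) cofinite (𝓝 0)) : u 0 = 0 := by
  have hr : -a / b ≠ 0 := div_ne_zero (neg_ne_zero.2 ha) hb
  have hgeom : ∀ k, u (k + 1) = -a / b * u k := fun k => by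
    field_simp
    linear_combination hrec k
  refine eq_zero_of_tendsto_norm_zpow_mul hr (hu.congr fun k => ?_)
  rw [eq_zpow_mul_of_forall_add_one hr hgeom k]

end NormedField

theorem stmt10_general (Γ : Type*) [Group Γ]
    (γ₁ γ₂ : Γ)
    (a b : ℂ) (ha : a ≠ 0) (hb : b ≠ 0)
    (hord : ∀ n : ℕ, 1 ≤ n → (γ₁⁻¹ * γ₂) ^ n ≠ 1)
    (g : lp (fun _ : Γ => ℂ) 2)
    (hg : ∀ γ : Γ, conj a * g (γ * γ₁) + conj b * g (γ * γ₂) = 0) :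
    g = 0 := by
  set h := γ₁⁻¹ * γ₂
  have hinf : ¬ IsOfFinOrder h := fun hfin => by
    obtain ⟨n, hn, hn1⟩ := isOfFinOrder_iff_pow_eq_one.1 hfin
    exact hord n hn hn1
  ext γ₀
  have horbit : Function.Injective fun k : ℤ => γ₀ * h ^ k :=
    (mul_right_injective γ₀).comp (injective_zpow_iff_not_isOfFinOrder.2 hinf)
  have hrec : ∀ k : ℤ, conj a * g (γ₀ * h ^ k) + conj b * g (γ₀ * h ^ (k + 1)) = 0 := by
    intro k
    convert hg (γ₀ * h ^ k * γ₁⁻¹) using 4 <;> simp [h, zpow_add_one, mul_assoc]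
  simpa using eq_zero_of_tendsto_norm_of_mul_add_mul_add_one ((map_ne_zero _).2 ha)
    ((map_ne_zero _).2 hb) hrec
    ((lp.tendsto_norm_cofinite_zero (by norm_num) g).comp horbit.tendsto_cofinite)

/-- Two-pronged comb `f = a δ_{γ₁} + b δ_{γ₂}`, with `h = γ₁⁻¹γ₂` of
infinite order: any `g ∈ ℓ²(Γ)` in the kernel of the adjoint of right convolution by `f`,
i.e. satisfying `conj a · g(γγ₁) + conj b · g(γγ₂) = 0` for all `γ`, is zero. -/
theorem stmt10 (Γ : Type*) [Group Γ] [Countable Γ]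
    (γ₁ γ₂ : Γ) (hne : γ₁ ≠ γ₂)
    (a b : ℂ) (ha : a ≠ 0) (hb : b ≠ 0)
    (hord : ∀ n : ℕ, 1 ≤ n → (γ₁⁻¹ * γ₂) ^ n ≠ 1)
    (g : lp (fun _ : Γ => ℂ) 2)
    (hg : ∀ γ : Γ, conj a * g (γ * γ₁) + conj b * g (γ * γ₂) = 0) :
    g = 0 :=
  stmt10_general Γ γ₁ γ₂ a b ha hb hord g hg
end

section
/- Let G be a second countable LCA group with a compact open subgroup H, and fix a section C ⊆ Ĝ of Ĝ/H⊥, so that Ĝ is partitioned by the cosets {H⊥ + σ}_{σ∈C}. Then for f, g ∈ L²(G) and any [x] ∈ G/H, ⟨f, T_{[x]}g⟩ = ∫_{H⊥} (Σ_{σ∈C} f̂(η+σ) ĝ(η+σ)̄ ) η(x) dη, where T_{[x]} is the translation operator defined by (T_{[x]}f)^ = f̂ ω_{[x]} with ω_{[x]}(η+σ) = η(x)̄ for η ∈ H⊥, σ ∈ C; in particular the bracket [f,g](η) = Σ_{σ∈C} f̂(η+σ) ĝ(η+σ)̄ belongs to L¹(H⊥). -/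
open MeasureTheory Set
open scoped ComplexConjugate ENNReal

/-! The translates `K + c i` tile `G`, so by translation invariance of Haar measure every
integrable `h` satisfies `∫ h = ∑ᵢ ∫_K h(· + c i) = ∫_K ∑ᵢ h(· + c i)`, the exchange of sum and
integral being justified by `∑ᵢ ∫_K ‖h(· + c i)‖ = ∫ ‖h‖ < ∞`. For `h = f · conj (g ω)` the
periodization `∑ᵢ h(η + c i)` is the bracket `[f, g](η)` times `χ η`, since
`ω(η + c i) = conj (χ η)`; for `h = f · conj g` (integrable by Cauchy–Schwarz) the same
argument puts `[f, g]` in `L¹(K)`. -/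

section IntegrableTsum

variable {α E : Type*} [MeasurableSpace α] {μ : Measure α} [NormedAddCommGroup E]
  [CompleteSpace E] {ι : Type*} [Countable ι]

theorem integrable_tsum {f : ι → α → E} (hf : ∀ i, AEStronglyMeasurable (f i) μ)
    (hf' : ∑' i, ∫⁻ a, ‖f i a‖ₑ ∂μ ≠ ∞) :
    Integrable (fun a => ∑' i, f i a) μ := by
  have hmeas : ∀ i, AEMeasurable (fun a => ‖f i a‖ₑ) μ := fun i => (hf i).enorm
  have hfin : ∫⁻ a, ∑' i, ‖f i a‖ₑ ∂μ ≠ ∞ := by rwa [lintegral_tsum hmeas]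
  have hsum : ∀ᵐ a ∂μ, Summable fun i => f i a := by
    filter_upwards [ae_lt_top' (AEMeasurable.tsum hmeas) hfin] with a ha
    exact Summable.of_enorm ha.ne
  refine ⟨aestronglyMeasurable_of_tendsto_ae Filter.atTop
    (fun s : Finset ι => s.aestronglyMeasurable_sum fun i _ => hf i) ?_, ?_⟩
  · filter_upwards [hsum] with a ha
    simp only [Finset.sum_apply]
    exact ha.hasSum
  · calc ∫⁻ a, ‖∑' i, f i a‖ₑ ∂μ ≤ ∫⁻ a, ∑' i, ‖f i a‖ₑ ∂μ :=
          lintegral_mono fun a => enorm_tsum_le_tsum_enorm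
      _ < ∞ := hfin.lt_top

end IntegrableTsum

section TranslationTiling

variable {G : Type*} [AddGroup G] {K : Set G} {ι : Type*} {c : ι → G}

def IsTranslationTiling (K : Set G) (c : ι → G) : Prop :=
  ∀ γ : G, ∃! p : K × ι, (p.1 : G) + c p.2 = γ

theorem pairwise_disjoint_preimage_sub (hK : IsTranslationTiling K c) :
    Pairwise (Function.onFun Disjoint fun i => (· - c i) ⁻¹' K) := by
  intro i j hij
  refine disjoint_left.2 fun γ hi hj => hij ?_
  obtain ⟨p, -, huniq⟩ := hK γ
  have hpi := huniq (⟨γ - c i, hi⟩, i) (sub_add_cancel γ (c i))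
  have hpj := huniq (⟨γ - c j, hj⟩, j) (sub_add_cancel γ (c j))
  exact congrArg Prod.snd (hpi.trans hpj.symm)

theorem iUnion_preimage_sub_eq_univ (hK : IsTranslationTiling K c) :
    ⋃ i, (· - c i) ⁻¹' K = univ := by
  refine eq_univ_of_forall fun γ => mem_iUnion.2 ?_
  obtain ⟨⟨η, i⟩, hγ, -⟩ := hK γ
  refine ⟨i, ?_⟩
  simp only [mem_preimage, ← hγ, add_sub_cancel_right, Subtype.coe_prop]

variable [MeasurableSpace G] [MeasurableAdd G] {μ : Measure G} [μ.IsAddRightInvariant]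

theorem aestronglyMeasurable_comp_add_restrict {E : Type*} [NormedAddCommGroup E]
    {h : G → E} (hh : Integrable h μ) (i : ι) :
    AEStronglyMeasurable (fun η => h (η + c i)) (μ.restrict K) :=
  (hh.1.comp_measurePreserving (measurePreserving_add_right μ (c i))).restrict

variable [Countable ι]

theorem lintegral_eq_tsum_setLIntegral_add (hKm : MeasurableSet K)
    (hK : IsTranslationTiling K c) (φ : G → ℝ≥0∞) :
    ∫⁻ γ, φ γ ∂μ = ∑' i, ∫⁻ η in K, φ (η + c i) ∂μ := by
  rw [← setLIntegral_univ, ← iUnion_preimage_sub_eq_univ hK,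
    lintegral_iUnion (fun i => hKm.preimage (measurable_sub_const' (c i)))
      (pairwise_disjoint_preimage_sub hK)]
  refine tsum_congr fun i => ?_
  rw [← (measurePreserving_sub_right μ (c i)).setLIntegral_comp_preimage_emb
    (measurableEmbedding_subRight (c i)) (fun η => φ (η + c i))]
  simp only [sub_add_cancel]

theorem aestronglyMeasurable_of_forall_add {β : Type*} [TopologicalSpace β]
    [TopologicalSpace.PseudoMetrizableSpace β] (hKm : MeasurableSet K)
    (hK : IsTranslationTiling K c) {φ : G → β} {ψ : ι → G → β}
    (hψ : ∀ i, AEStronglyMeasurable (ψ i) μ) (hφ : ∀ i, ∀ η ∈ K, φ (η + c i) = ψ i η) :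
    AEStronglyMeasurable φ μ := by
  rw [← Measure.restrict_univ (μ := μ), ← iUnion_preimage_sub_eq_univ hK,
    aestronglyMeasurable_iUnion_iff]
  intro i
  refine ((hψ i).comp_measurePreserving (measurePreserving_sub_right μ (c i))).restrict.congr ?_
  refine ae_restrict_of_forall_mem
    (hKm.preimage (measurable_sub_const' (c i))) fun γ hγ => ?_
  simpa only [Function.comp_apply, sub_add_cancel] using (hφ i _ hγ).symm

theorem tsum_lintegral_enorm_add_ne_top (hKm : MeasurableSet K)
    (hK : IsTranslationTiling K c) {E : Type*} [NormedAddCommGroup E]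
    {h : G → E} (hh : Integrable h μ) :
    ∑' i, ∫⁻ η in K, ‖h (η + c i)‖ₑ ∂μ ≠ ∞ := by
  rw [← lintegral_eq_tsum_setLIntegral_add hKm hK fun γ => ‖h γ‖ₑ]
  exact hh.2.ne

theorem integrableOn_tsum_add (hKm : MeasurableSet K)
    (hK : IsTranslationTiling K c) {E : Type*} [NormedAddCommGroup E]
    [CompleteSpace E] {h : G → E} (hh : Integrable h μ) :
    IntegrableOn (fun η => ∑' i, h (η + c i)) K μ :=
  integrable_tsum (aestronglyMeasurable_comp_add_restrict hh)
    (tsum_lintegral_enorm_add_ne_top hKm hK hh)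

theorem setIntegral_tsum_add (hKm : MeasurableSet K)
    (hK : IsTranslationTiling K c) {E : Type*} [NormedAddCommGroup E]
    [NormedSpace ℝ E] {h : G → E} (hh : Integrable h μ) :
    ∫ η in K, ∑' i, h (η + c i) ∂μ = ∫ γ, h γ ∂μ := by
  have htile : ∀ i, MeasurableSet ((· - c i) ⁻¹' K) := fun i =>
    hKm.preimage (measurable_sub_const' (c i))
  rw [integral_tsum (aestronglyMeasurable_comp_add_restrict hh)
      (tsum_lintegral_enorm_add_ne_top hKm hK hh),
    ← setIntegral_univ, ← iUnion_preimage_sub_eq_univ hK,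
    integral_iUnion htile (pairwise_disjoint_preimage_sub hK) hh.integrableOn]
  refine tsum_congr fun i => ?_
  rw [← (measurePreserving_sub_right μ (c i)).setIntegral_preimage_emb
    (measurableEmbedding_subRight (c i))]
  simp only [sub_add_cancel]

end TranslationTiling

theorem stmt14_general
    (Gd : Type*) [AddCommGroup Gd] [TopologicalSpace Gd] [IsTopologicalAddGroup Gd]
    [MeasurableSpace Gd] [BorelSpace Gd]
    (μ : Measure Gd) [μ.IsAddHaarMeasure]
    (K : AddSubgroup Gd) (hKo : IsOpen (K : Set Gd))
    (ι : Type*) [Countable ι] (c : ι → Gd)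
    (hsec : ∀ γ : Gd, ∃! p : K × ι, (p.1 : Gd) + c p.2 = γ)
    (χ : Gd → ℂ) (hχcont : Continuous χ)
    (hχnorm : ∀ x : Gd, ‖χ x‖ = 1)
    (ω : Gd → ℂ) (hω : ∀ (η : K) (i : ι), ω ((η : Gd) + c i) = conj (χ (η : Gd)))
    (f g : Gd → ℂ) (hf : MemLp f 2 μ) (hg : MemLp g 2 μ) :
    IntegrableOn (fun η : Gd => ∑' i : ι, f (η + c i) * conj (g (η + c i))) (K : Set Gd) μ ∧
    ∫ γ : Gd, f γ * conj (g γ * ω γ) ∂μ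
      = ∫ η in (K : Set Gd), (∑' i : ι, f (η + c i) * conj (g (η + c i))) * χ η ∂μ := by
  have hKm : MeasurableSet (K : Set Gd) := hKo.measurableSet
  have hF : Integrable (fun γ => f γ * conj (g γ)) μ := hf.integrable_mul hg.star
  have hωm : AEStronglyMeasurable ω μ :=
    aestronglyMeasurable_of_forall_add (ψ := fun _ η => conj (χ η)) hKm hsec
      (fun _ => (Complex.continuous_conj.comp hχcont).aestronglyMeasurable)
      fun i η hη => hω ⟨η, hη⟩ i
  have hωnorm : ∀ γ, ‖conj (ω γ)‖ ≤ 1 := fun γ => by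
    obtain ⟨⟨η, i⟩, rfl, -⟩ := hsec γ
    simp [hω, hχnorm]
  have hh : Integrable (fun γ => f γ * conj (g γ * ω γ)) μ := by
    simpa only [map_mul, mul_assoc, Pi.star_apply, Complex.star_def] using
      hF.mul_bdd hωm.star (Filter.Eventually.of_forall hωnorm)
  refine ⟨integrableOn_tsum_add hKm hsec hF, ?_⟩
  rw [← setIntegral_tsum_add hKm hsec hh]
  refine setIntegral_congr_fun hKm fun η hη => ?_
  simp only [hω ⟨η, hη⟩, map_mul, Complex.conj_conj, ← mul_assoc, tsum_mul_right]

/-- Number-theoretic setting, stated on the dual side (Plancherel is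
assumed, so `f, g` stand for the Fourier transforms `f̂, ĝ` in `L²(Ĝ)`). Here `Gd = Ĝ` is a
second countable LCA group with Haar measure `μ`, `K = H⊥` is a compact open subgroup, and
`c : ι → Gd` enumerates a section `C` of `Ĝ/H⊥` (every `γ ∈ Ĝ` is uniquely `η + c i` with
`η ∈ K`). The character `χ = η ↦ η(x)` of `K` (extended as a character of `Gd`) and the
multiplier `ω = ω_{[x]}`, with `ω(η + c i) = conj (χ η)`, satisfy:
the bracket `η ↦ Σ_σ f̂(η+σ) conj(ĝ(η+σ))` is in `L¹(H⊥)`, and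
`⟨f, T_{[x]}g⟩ = ∫_Ĝ f̂ conj(ĝ ω) dμ = ∫_{H⊥} (Σ_σ f̂(η+σ) conj(ĝ(η+σ))) η(x) dμ(η)`. -/
theorem stmt14
    (Gd : Type*) [AddCommGroup Gd] [TopologicalSpace Gd] [IsTopologicalAddGroup Gd]
    [LocallyCompactSpace Gd] [SecondCountableTopology Gd]
    [MeasurableSpace Gd] [BorelSpace Gd]
    (μ : Measure Gd) [μ.IsAddHaarMeasure]
    (K : AddSubgroup Gd) (hKc : IsCompact (K : Set Gd)) (hKo : IsOpen (K : Set Gd))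
    (ι : Type*) [Countable ι] (c : ι → Gd)
    (hsec : ∀ γ : Gd, ∃! p : K × ι, (p.1 : Gd) + c p.2 = γ)
    (χ : Gd → ℂ) (hχcont : Continuous χ) (hχmul : ∀ x y : Gd, χ (x + y) = χ x * χ y)
    (hχnorm : ∀ x : Gd, ‖χ x‖ = 1)
    (ω : Gd → ℂ) (hω : ∀ (η : K) (i : ι), ω ((η : Gd) + c i) = conj (χ (η : Gd)))
    (f g : Gd → ℂ) (hf : MemLp f 2 μ) (hg : MemLp g 2 μ) :
    IntegrableOn (fun η : Gd => ∑' i : ι, f (η + c i) * conj (g (η + c i))) (K : Set Gd) μ ∧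
    ∫ γ : Gd, f γ * conj (g γ * ω γ) ∂μ
      = ∫ η in (K : Set Gd), (∑' i : ι, f (η + c i) * conj (g (η + c i))) * χ η ∂μ :=
  stmt14_general Gd μ K hKo ι c hsec χ hχcont hχnorm ω hω f g hf hg
end

section
/- Let G be a second countable LCA group with compact open subgroup H and C a section of Ĝ/H⊥. Then the map T : G/H → U(L²(G)), [x] ↦ T_{[x]}, defined via (T_{[x]}f)^ = f̂ ω_{[x]}, is a unitary representation of the discrete group G/H: each T_{[x]} is unitary, T_{[x]}T_{[y]} = T_{[x+y]}, and T_{[0]} is the identity. -/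
/-! Under the Fourier transform `𝓕`, `T_{[x]}` is the conjugate `𝓕⁻¹ ∘ M_{[x]} ∘ 𝓕` of
the operator `M_{[x]}` of multiplication by `ω_{[x]}` on `L²(Ĝ)`. Multiplication by a unimodular
function preserves the `Lᵖ` norm, and `ω_{[x]} ω_{[y]} = ω_{[x+y]}`, `ω_{[0]} = 1` make
`[x] ↦ M_{[x]}` a homomorphism into the isometries, each invertible with inverse `M_{-[x]}`.
Conjugation by the unitary `𝓕` is a group isomorphism, so `[x] ↦ T_{[x]}` is one as well. -/

open MeasureTheory Filter
open scoped ENNReal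

namespace LinearIsometryEquiv

variable {R E F : Type*} [Semiring R] [SeminormedAddCommGroup E] [SeminormedAddCommGroup F]
  [Module R E] [Module R F]

def conjHom (e : E ≃ₗᵢ[R] F) : (F ≃ₗᵢ[R] F) →* (E ≃ₗᵢ[R] E) where
  toFun T := e.trans (T.trans e.symm)
  map_one' := by ext; simp
  map_mul' T T' := by ext; simp

theorem apply_conjHom_apply (e : E ≃ₗᵢ[R] F) (T : F ≃ₗᵢ[R] F) (x : E) :
    e (e.conjHom T x) = T (e x) := by
  simp [conjHom]

end LinearIsometryEquiv

namespace MeasureTheory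

variable {α 𝕜 E : Type*} [MeasurableSpace α] {μ : Measure α} [NormedField 𝕜]
  [NormedAddCommGroup E] [NormedSpace 𝕜 E] {p : ℝ≥0∞}

theorem eLpNorm_smul_of_norm_eq_one {u : α → 𝕜} (hu : ∀ x, ‖u x‖ = 1) (f : α → E) :
    eLpNorm (fun x => u x • f x) p μ = eLpNorm f p μ :=
  eLpNorm_congr_norm_ae (Eventually.of_forall fun x => by rw [norm_smul, hu, one_mul])

theorem MemLp.smul_of_norm_eq_one {u : α → 𝕜} (hu : AEStronglyMeasurable u μ)
    (hu1 : ∀ x, ‖u x‖ = 1) {f : α → E} (hf : MemLp f p μ) :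
    MemLp (fun x => u x • f x) p μ :=
  ⟨hu.smul hf.1, by rw [eLpNorm_smul_of_norm_eq_one hu1]; exact hf.2⟩

namespace Lp

variable [Fact (1 ≤ p)]

noncomputable def unimodularSMul (u : α → 𝕜) (hu : AEStronglyMeasurable u μ)
    (hu1 : ∀ x, ‖u x‖ = 1) : Lp E p μ →ₗᵢ[𝕜] Lp E p μ where
  toFun f := ((Lp.memLp f).smul_of_norm_eq_one hu hu1).toLp _
  map_add' f g := by
    rw [← MemLp.toLp_add]
    exact MemLp.toLp_congr _ _ <| (coeFn_add f g).mono fun x hx => by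
      simp only [hx, Pi.add_apply, smul_add]
  map_smul' c f := by
    rw [RingHom.id_apply, ← MemLp.toLp_const_smul]
    exact MemLp.toLp_congr _ _ <| (coeFn_smul c f).mono fun x hx => by
      simp only [hx, Pi.smul_apply, smul_comm (u x) c]
  norm_map' f := (norm_toLp _ ((Lp.memLp f).smul_of_norm_eq_one hu hu1)).trans <| by
    rw [eLpNorm_smul_of_norm_eq_one hu1, norm_def]

theorem coeFn_unimodularSMul {u : α → 𝕜} (hu : AEStronglyMeasurable u μ)
    (hu1 : ∀ x, ‖u x‖ = 1) (f : Lp E p μ) :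
    unimodularSMul u hu hu1 f =ᵐ[μ] fun x => u x • f x :=
  MemLp.coeFn_toLp ((Lp.memLp f).smul_of_norm_eq_one hu hu1)

theorem unimodularSMul_unimodularSMul {u v w : α → 𝕜} (hu : AEStronglyMeasurable u μ)
    (hu1 : ∀ x, ‖u x‖ = 1) (hv : AEStronglyMeasurable v μ) (hv1 : ∀ x, ‖v x‖ = 1)
    (hw : AEStronglyMeasurable w μ) (hw1 : ∀ x, ‖w x‖ = 1) (hwuv : ∀ x, w x = u x * v x)
    (f : Lp E p μ) :
    unimodularSMul u hu hu1 (unimodularSMul v hv hv1 f) = unimodularSMul w hw hw1 f := by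
  refine Lp.ext ?_
  filter_upwards [coeFn_unimodularSMul hu hu1 (unimodularSMul v hv hv1 f),
    coeFn_unimodularSMul hv hv1 f, coeFn_unimodularSMul hw hw1 f] with x huvf hvf hwf
  rw [huvf, hvf, hwf, hwuv, mul_smul]

theorem unimodularSMul_of_forall_eq_one {u : α → 𝕜} (hu : AEStronglyMeasurable u μ)
    (hu1 : ∀ x, ‖u x‖ = 1) (h : ∀ x, u x = 1) (f : Lp E p μ) :
    unimodularSMul u hu hu1 f = f := by
  refine Lp.ext ?_
  filter_upwards [coeFn_unimodularSMul hu hu1 f] with x huf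
  rw [huf, h, one_smul]

noncomputable def unimodularSMulEquiv {u v : α → 𝕜} (hu : AEStronglyMeasurable u μ)
    (hu1 : ∀ x, ‖u x‖ = 1) (hv : AEStronglyMeasurable v μ) (hv1 : ∀ x, ‖v x‖ = 1)
    (huv : ∀ x, u x * v x = 1) : Lp E p μ ≃ₗᵢ[𝕜] Lp E p μ :=
  have hvu : ∀ x, v x * u x = 1 := fun x => by rw [mul_comm, huv]
  LinearIsometryEquiv.ofLinearIsometry (unimodularSMul u hu hu1)
    (unimodularSMul v hv hv1).toLinearMap
    (LinearMap.ext fun f => (unimodularSMul_unimodularSMul hu hu1 hv hv1 aestronglyMeasurable_one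
      (fun _ => norm_one) (fun x => (huv x).symm) f).trans
        (unimodularSMul_of_forall_eq_one _ _ (fun _ => rfl) f))
    (LinearMap.ext fun f => (unimodularSMul_unimodularSMul hv hv1 hu hu1 aestronglyMeasurable_one
      (fun _ => norm_one) (fun x => (hvu x).symm) f).trans
        (unimodularSMul_of_forall_eq_one _ _ (fun _ => rfl) f))

@[simp]
theorem coe_unimodularSMulEquiv {u v : α → 𝕜} (hu : AEStronglyMeasurable u μ)
    (hu1 : ∀ x, ‖u x‖ = 1) (hv : AEStronglyMeasurable v μ) (hv1 : ∀ x, ‖v x‖ = 1)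
    (huv : ∀ x, u x * v x = 1) :
    ⇑(unimodularSMulEquiv (E := E) (p := p) hu hu1 hv hv1 huv) = unimodularSMul u hu hu1 :=
  rfl

noncomputable def unimodularSMulRep {A : Type*} [AddGroup A] (ω : A → α → 𝕜)
    (hmeas : ∀ a, AEStronglyMeasurable (ω a) μ) (hnorm : ∀ a x, ‖ω a x‖ = 1)
    (hadd : ∀ a b x, ω (a + b) x = ω a x * ω b x) (hzero : ∀ x, ω 0 x = 1) :
    Multiplicative A →* (Lp E p μ ≃ₗᵢ[𝕜] Lp E p μ) where
  toFun a := unimodularSMulEquiv (hmeas a.toAdd) (hnorm a.toAdd) (hmeas (-a.toAdd))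
    (hnorm (-a.toAdd)) fun x => by rw [← hadd, add_neg_cancel, hzero]
  map_one' := LinearIsometryEquiv.ext fun f => by
    simpa using unimodularSMul_of_forall_eq_one (hmeas 0) (hnorm 0) hzero f
  map_mul' a b := LinearIsometryEquiv.ext fun f => by
    simpa using (unimodularSMul_unimodularSMul _ _ _ _ _ _ (hadd a.toAdd b.toAdd) f).symm

theorem coeFn_unimodularSMulRep {A : Type*} [AddGroup A] (ω : A → α → 𝕜)
    (hmeas : ∀ a, AEStronglyMeasurable (ω a) μ) (hnorm : ∀ a x, ‖ω a x‖ = 1)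
    (hadd : ∀ a b x, ω (a + b) x = ω a x * ω b x) (hzero : ∀ x, ω 0 x = 1) (a : A)
    (f : Lp E p μ) :
    unimodularSMulRep ω hmeas hnorm hadd hzero (.ofAdd a) f =ᵐ[μ] fun x => ω a x • f x :=
  coeFn_unimodularSMul (hmeas a) (hnorm a) f

end Lp

end MeasureTheory

theorem stmt15_general
    (G : Type*) [AddCommGroup G] [MeasurableSpace G] (ν : Measure G) (H : AddSubgroup G)
    (Gd : Type*) [MeasurableSpace Gd] (μ : Measure Gd)
    (𝓕 : Lp ℂ 2 ν ≃ₗᵢ[ℂ] Lp ℂ 2 μ)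
    (ω : G ⧸ H → Gd → ℂ)
    (hmeas : ∀ q : G ⧸ H, AEStronglyMeasurable (ω q) μ)
    (hnorm : ∀ (q : G ⧸ H) (γ : Gd), ‖ω q γ‖ = 1)
    (hmul : ∀ (q r : G ⧸ H) (γ : Gd), ω (q + r) γ = ω q γ * ω r γ)
    (hzero : ∀ γ : Gd, ω 0 γ = 1) :
    ∃ T : Multiplicative (G ⧸ H) →* (Lp ℂ 2 ν ≃ₗᵢ[ℂ] Lp ℂ 2 ν),
      ∀ (q : G ⧸ H) (f : Lp ℂ 2 ν),
        (𝓕 (T (Multiplicative.ofAdd q) f) : Gd → ℂ)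
          =ᵐ[μ] fun γ => ω q γ * (𝓕 f : Gd → ℂ) γ := by
  refine ⟨𝓕.conjHom.comp (Lp.unimodularSMulRep ω hmeas hnorm hmul hzero), fun q f => ?_⟩
  rw [MonoidHom.comp_apply, LinearIsometryEquiv.apply_conjHom_apply]
  exact Lp.coeFn_unimodularSMulRep ω hmeas hnorm hmul hzero q (𝓕 f)

/-- Number-theoretic setting: `G` is a second countable LCA group with Haar
measure `ν` and compact open subgroup `H`. Since Plancherel's theorem for LCA groups is
assumed, the Fourier transform is given as a unitary `𝓕 : L²(G) ≅ L²(Ĝ)`, where the dual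
`Ĝ` is represented as a measure space `(Gd, μ)`. The multipliers `ω_{[x]}` (`[x] ∈ G/H`) are
unimodular, multiplicative in `[x]`, with `ω_{[0]} = 1`. Then `[x] ↦ T_{[x]}`, defined by
`(T_{[x]}f)^ = f̂ ω_{[x]}`, is a unitary representation of the discrete group `G/H` on
`L²(G)`: each `T_{[x]}` is unitary, `T_{[x]}T_{[y]} = T_{[x+y]}` and `T_{[0]} = id`
(this is the monoid-homomorphism property into the group of unitaries of `L²(G)`). -/
theorem stmt15
    (G : Type*) [AddCommGroup G] [TopologicalSpace G] [IsTopologicalAddGroup G]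
    [LocallyCompactSpace G] [SecondCountableTopology G]
    [MeasurableSpace G] [BorelSpace G]
    (ν : Measure G) [ν.IsAddHaarMeasure]
    (H : AddSubgroup G) (hHc : IsCompact (H : Set G)) (hHo : IsOpen (H : Set G))
    (Gd : Type*) [MeasurableSpace Gd] (μ : Measure Gd)
    (𝓕 : Lp ℂ 2 ν ≃ₗᵢ[ℂ] Lp ℂ 2 μ)
    (ω : G ⧸ H → Gd → ℂ)
    (hmeas : ∀ q : G ⧸ H, AEStronglyMeasurable (ω q) μ)
    (hnorm : ∀ (q : G ⧸ H) (γ : Gd), ‖ω q γ‖ = 1)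
    (hmul : ∀ (q r : G ⧸ H) (γ : Gd), ω (q + r) γ = ω q γ * ω r γ)
    (hzero : ∀ γ : Gd, ω 0 γ = 1) :
    ∃ T : Multiplicative (G ⧸ H) →* (Lp ℂ 2 ν ≃ₗᵢ[ℂ] Lp ℂ 2 ν),
      ∀ (q : G ⧸ H) (f : Lp ℂ 2 ν),
        (𝓕 (T (Multiplicative.ofAdd q) f) : Gd → ℂ)
          =ᵐ[μ] fun γ => ω q γ * (𝓕 f : Gd → ℂ) γ :=
  stmt15_general G ν H Gd μ 𝓕 ω hmeas hnorm hmul hzero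
end

section
/- Let Γ be a countable discrete group acting on a σ-finite measure space (X, μ) by a measure-preserving action σ that has the tiling property with tiling set C ⊆ X (the sets {σ_γ(C)}_{γ∈Γ} are pairwise μ-essentially disjoint and cover X up to null sets). Then the map Z : L²(X, μ) → L²(C, ℓ²(Γ)) defined by Z[φ](x) = (φ(σ_{γ⁻¹}(x)))_{γ∈Γ} for x ∈ C is an isometric isomorphism. -/
open MeasureTheory Set Filter Function
open scoped ENNReal Pointwise

/-!
Since the translates `γ • C` tile `X`, every `g ≥ 0` satisfies
`∫⁻ x in C, ∑' γ, g (γ⁻¹ • x) ∂μ = ∫⁻ x, g x ∂μ` (`IsFundamentalDomain.lintegral_eq_tsum'`).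
For `g = ‖f‖²` this says both that the orbit sequences `(f (γ⁻¹ • x))_γ` are square-summable
for a.e. `x ∈ C` and that the Zak transform preserves the `L²` norm. It is onto because the
translates of the fundamental interior of `C` are genuinely disjoint, so a point `y` is moved into
it by at most one `γ`, and `F` is then the transform of `y ↦ F (γ • y) γ`.
-/

section lpSpace

variable {ι : Type*} {E : ι → Type*} [∀ i, NormedAddCommGroup (E i)] {p : ℝ≥0∞}

theorem lp.enorm_rpow_eq_tsum [Fact (1 ≤ p)] (hp : 0 < p.toReal) (f : lp E p) :
    ‖f‖ₑ ^ p.toReal = ∑' i, ‖f i‖ₑ ^ p.toReal := by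
  have hsum : Summable fun i => ‖f i‖ ^ p.toReal := (memℓp_gen_iff hp).1 f.2
  simp_rw [← ofReal_norm, ENNReal.ofReal_rpow_of_nonneg (norm_nonneg _) hp.le,
    lp.norm_rpow_eq_tsum hp, ENNReal.ofReal_tsum_of_nonneg (fun _ => by positivity) hsum]

theorem memℓp_of_tsum_enorm_rpow_ne_top (hp : 0 < p.toReal) {f : ∀ i, E i}
    (h : ∑' i, ‖f i‖ₑ ^ p.toReal ≠ ∞) : Memℓp f p := by
  refine memℓp_gen ((ENNReal.summable_toReal h).congr fun i => ?_)
  rw [← ofReal_norm, ENNReal.ofReal_rpow_of_nonneg (norm_nonneg _) hp.le,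
    ENNReal.toReal_ofReal (by positivity)]

end lpSpace

section FundamentalDomain

variable {Γ X : Type*} [Group Γ] [MulAction Γ X] [MeasurableSpace X]
  [MeasurableConstSMul Γ X] {μ : Measure X} [SMulInvariantMeasure Γ X μ]

theorem AEMeasurable.comp_inv_smul_restrict {g : X → ℝ≥0∞} (hg : AEMeasurable g μ) (γ : Γ)
    (s : Set X) : AEMeasurable (fun x => g (γ⁻¹ • x)) (μ.restrict s) :=
  (hg.comp_quasiMeasurePreserving (measurePreserving_smul γ⁻¹ μ).quasiMeasurePreserving).restrict

variable [Countable Γ]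

theorem ae_forall_inv_smul_eq {β : Type*} {u v : X → β} (h : u =ᵐ[μ] v) :
    ∀ᵐ x ∂μ, ∀ γ : Γ, u (γ⁻¹ • x) = v (γ⁻¹ • x) :=
  ae_all_iff.2 fun γ => (measurePreserving_smul γ⁻¹ μ).quasiMeasurePreserving.ae_eq h

theorem MeasureTheory.IsFundamentalDomain.setLIntegral_tsum_inv_smul {C : Set X}
    (hC : IsFundamentalDomain Γ C μ) {g : X → ℝ≥0∞} (hg : AEMeasurable g μ) :
    ∫⁻ x in C, ∑' γ : Γ, g (γ⁻¹ • x) ∂μ = ∫⁻ x, g x ∂μ := by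
  rw [lintegral_tsum fun γ => hg.comp_inv_smul_restrict γ C, hC.lintegral_eq_tsum']

end FundamentalDomain

namespace Zak

variable {X E : Type*} [NormedAddCommGroup E]

open Classical in
/-- The junk value `0` is taken where the orbit sequence is not square-summable, which for
`f ∈ L²` happens only on a null set of `C` (`ae_memℓp_of_memLp`). -/
noncomputable def zakFun (Γ : Type*) [Group Γ] [MulAction Γ X] (f : X → E) (x : X) :
    lp (fun _ : Γ => E) 2 :=
  if h : Memℓp (fun γ : Γ => f (γ⁻¹ • x)) 2 then ⟨_, h⟩ else 0

variable {Γ : Type*} [Group Γ] [MulAction Γ X] {f g : X → E} {x : X}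

theorem coe_zakFun (h : Memℓp (fun γ : Γ => f (γ⁻¹ • x)) 2) :
    ⇑(zakFun Γ f x) = fun γ : Γ => f (γ⁻¹ • x) := by
  rw [zakFun, dif_pos h]

theorem zakFun_congr (h : ∀ γ : Γ, f (γ⁻¹ • x) = g (γ⁻¹ • x)) :
    zakFun Γ f x = zakFun Γ g x := by
  have hfg : (fun γ : Γ => f (γ⁻¹ • x)) = fun γ => g (γ⁻¹ • x) := funext h
  unfold zakFun
  rw [hfg]

theorem zakFun_add (hf : Memℓp (fun γ : Γ => f (γ⁻¹ • x)) 2)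
    (hg : Memℓp (fun γ : Γ => g (γ⁻¹ • x)) 2) :
    zakFun Γ (f + g) x = zakFun Γ f x + zakFun Γ g x := by
  have hfg : Memℓp (fun γ : Γ => (f + g) (γ⁻¹ • x)) 2 := hf.add hg
  refine lp.ext ?_
  rw [lp.coeFn_add, coe_zakFun hf, coe_zakFun hg, coe_zakFun hfg]
  rfl

theorem zakFun_smul {𝕜 : Type*} [NormedField 𝕜] [NormedSpace 𝕜 E] (c : 𝕜)
    (hf : Memℓp (fun γ : Γ => f (γ⁻¹ • x)) 2) :
    zakFun Γ (c • f) x = c • zakFun Γ f x := by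
  have hcf : Memℓp (fun γ : Γ => (c • f) (γ⁻¹ • x)) 2 := hf.const_smul c
  refine lp.ext ?_
  rw [lp.coeFn_smul, coe_zakFun hf, coe_zakFun hcf]
  rfl

open Classical in
noncomputable def zakInv (s : Set X) (F : X → lp (fun _ : Γ => E) 2) (x : X) : E :=
  if h : ∃ γ : Γ, γ • x ∈ s then F (h.choose • x) h.choose else 0

variable {s : Set X} {F : X → lp (fun _ : Γ => E) 2}

theorem zakInv_inv_smul (hs : Pairwise (Disjoint on fun γ : Γ => γ • s)) (hx : x ∈ s) (γ : Γ) :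
    zakInv s F (γ⁻¹ • x) = F x γ := by
  have h : ∃ γ' : Γ, γ' • γ⁻¹ • x ∈ s := ⟨γ, by rwa [smul_inv_smul]⟩
  have hγ : h.choose = γ := by
    refine inv_injective (hs.eq (not_disjoint_iff.2 ⟨γ⁻¹ • x, ?_, smul_mem_smul_set hx⟩))
    exact mem_inv_smul_set_iff.2 h.choose_spec
  rw [zakInv, dif_pos h, hγ, smul_inv_smul]

theorem zakFun_zakInv (hs : Pairwise (Disjoint on fun γ : Γ => γ • s)) (hx : x ∈ s) :
    zakFun Γ (zakInv s F) x = F x := by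
  have horbit : (fun γ : Γ => zakInv s F (γ⁻¹ • x)) = ⇑(F x) := funext (zakInv_inv_smul hs hx)
  exact lp.ext ((coe_zakFun (horbit ▸ (F x).2)).trans horbit)

section Measure

variable [Countable Γ] [MeasurableSpace X] [MeasurableConstSMul Γ X] {μ : Measure X}
  [SMulInvariantMeasure Γ X μ] {C : Set X}

theorem zakFun_congr_ae (h : f =ᵐ[μ] g) :
    zakFun Γ f =ᵐ[μ.restrict C] zakFun Γ g := by
  filter_upwards [ae_restrict_of_ae (ae_forall_inv_smul_eq (Γ := Γ) h)] with x hx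
  exact zakFun_congr hx

theorem ae_memℓp_of_memLp (hC : IsFundamentalDomain Γ C μ) (hf : MemLp f 2 μ) :
    ∀ᵐ x ∂μ.restrict C, Memℓp (fun γ : Γ => f (γ⁻¹ • x)) 2 := by
  have hg : AEMeasurable (fun x => ‖f x‖ₑ ^ (2 : ℝ≥0∞).toReal) μ := hf.1.enorm.pow_const _
  have hfin : ∫⁻ x in C, ∑' γ : Γ, ‖f (γ⁻¹ • x)‖ₑ ^ (2 : ℝ≥0∞).toReal ∂μ ≠ ∞ := by
    rw [hC.setLIntegral_tsum_inv_smul hg]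
    exact (lintegral_rpow_enorm_lt_top_of_eLpNorm_lt_top two_ne_zero ENNReal.ofNat_ne_top hf.2).ne
  filter_upwards [ae_lt_top' (AEMeasurable.tsum fun γ => hg.comp_inv_smul_restrict γ C) hfin]
    with x hx
  exact memℓp_of_tsum_enorm_rpow_ne_top (by norm_num) hx.ne

theorem aestronglyMeasurable_zakFun (hf : AEStronglyMeasurable f μ)
    (hℓ : ∀ᵐ x ∂μ.restrict C, Memℓp (fun γ : Γ => f (γ⁻¹ • x)) 2) :
    AEStronglyMeasurable (zakFun Γ f) (μ.restrict C) := by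
  classical
  have hsingle (γ : Γ) : AEStronglyMeasurable
      (fun x => lp.single (E := fun _ : Γ => E) 2 γ (f (γ⁻¹ • x))) (μ.restrict C) :=
    (lp.isometry_single γ).continuous.comp_aestronglyMeasurable
      (hf.comp_quasiMeasurePreserving
        (measurePreserving_smul γ⁻¹ μ).quasiMeasurePreserving).restrict
  refine aestronglyMeasurable_of_tendsto_ae atTop
    (fun s => Finset.aestronglyMeasurable_fun_sum s fun γ _ => hsingle γ) ?_
  filter_upwards [hℓ] with x hx
  rw [zakFun, dif_pos hx]
  exact lp.hasSum_single (p := 2) ENNReal.ofNat_ne_top _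

theorem eLpNorm_zakFun (hC : IsFundamentalDomain Γ C μ) (hf : AEStronglyMeasurable f μ)
    (hℓ : ∀ᵐ x ∂μ.restrict C, Memℓp (fun γ : Γ => f (γ⁻¹ • x)) 2) :
    eLpNorm (zakFun Γ f) 2 (μ.restrict C) = eLpNorm f 2 μ := by
  simp only [eLpNorm_eq_lintegral_rpow_enorm_toReal two_ne_zero ENNReal.ofNat_ne_top]
  rw [← hC.setLIntegral_tsum_inv_smul (hf.enorm.pow_const _)]
  congr 1
  refine lintegral_congr_ae ?_
  filter_upwards [hℓ] with x hx
  rw [lp.enorm_rpow_eq_tsum (by norm_num), coe_zakFun hx]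

theorem memLp_zakFun (hC : IsFundamentalDomain Γ C μ) (hf : MemLp f 2 μ) :
    MemLp (zakFun Γ f) 2 (μ.restrict C) :=
  ⟨aestronglyMeasurable_zakFun hf.1 (ae_memℓp_of_memLp hC hf),
    eLpNorm_zakFun hC hf.1 (ae_memℓp_of_memLp hC hf) ▸ hf.2⟩

theorem aestronglyMeasurable_zakInv (hs : IsFundamentalDomain Γ s μ)
    (hdisj : Pairwise (Disjoint on fun γ : Γ => γ • s))
    (hF : AEStronglyMeasurable F (μ.restrict s)) : AEStronglyMeasurable (zakInv s F) μ := by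
  have hcover : μ.restrict (⋃ γ : Γ, γ⁻¹ • s) = μ := by
    refine Measure.restrict_eq_self_of_ae_mem ?_
    filter_upwards [hs.ae_covers] with x ⟨γ, hγ⟩
    exact mem_iUnion.2 ⟨γ, mem_inv_smul_set_iff.2 hγ⟩
  rw [← hcover, aestronglyMeasurable_iUnion_iff]
  intro γ
  have hmp : MeasurePreserving (γ • ·) (μ.restrict (γ⁻¹ • s)) (μ.restrict s) := by
    rw [← preimage_smul]
    exact (measurePreserving_smul γ μ).restrict_preimage_emb (measurableEmbedding_const_smul γ) s
  refine ((lp.lipschitzWith_one_eval 2 γ).continuous.comp_aestronglyMeasurable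
    (hF.comp_measurePreserving hmp)).congr ?_
  filter_upwards [ae_restrict_mem₀ (hs.nullMeasurableSet_smul γ⁻¹)] with y hy
  simpa only [comp_apply, inv_smul_smul] using
    (zakInv_inv_smul (F := F) hdisj (mem_inv_smul_set_iff.1 hy) γ).symm

theorem memLp_zakInv (hs : IsFundamentalDomain Γ s μ)
    (hdisj : Pairwise (Disjoint on fun γ : Γ => γ • s)) (hF : MemLp F 2 (μ.restrict s)) :
    MemLp (zakInv s F) 2 μ := by
  have hs_mem : ∀ᵐ x ∂μ.restrict s, x ∈ s := ae_restrict_mem₀ hs.nullMeasurableSet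
  have hℓ : ∀ᵐ x ∂μ.restrict s, Memℓp (fun γ : Γ => zakInv s F (γ⁻¹ • x)) 2 := by
    filter_upwards [hs_mem] with x hx
    exact funext (zakInv_inv_smul (F := F) hdisj hx) ▸ (F x).2
  have hzak : zakFun Γ (zakInv s F) =ᵐ[μ.restrict s] F := by
    filter_upwards [hs_mem] with x hx
    exact zakFun_zakInv hdisj hx
  have hm := aestronglyMeasurable_zakInv hs hdisj hF.1
  refine ⟨hm, ?_⟩
  rw [← eLpNorm_zakFun hs hm hℓ, eLpNorm_congr_ae hzak]
  exact hF.2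

variable (𝕜 : Type*) [NormedField 𝕜] [NormedSpace 𝕜 E]

noncomputable def zak (hC : IsFundamentalDomain Γ C μ) :
    Lp E 2 μ →ₗᵢ[𝕜] Lp (lp (fun _ : Γ => E) 2) 2 (μ.restrict C) where
  toFun φ := (memLp_zakFun hC (Lp.memLp φ)).toLp _
  map_add' φ ψ := by
    rw [← MemLp.toLp_add]
    refine MemLp.toLp_congr _ _ ?_
    filter_upwards [zakFun_congr_ae (Γ := Γ) (C := C) (Lp.coeFn_add φ ψ),
      ae_memℓp_of_memLp hC (Lp.memLp φ), ae_memℓp_of_memLp hC (Lp.memLp ψ)] with x h hφ hψ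
    rw [h, zakFun_add hφ hψ]
    rfl
  map_smul' c φ := by
    rw [← MemLp.toLp_const_smul]
    refine MemLp.toLp_congr _ _ ?_
    filter_upwards [zakFun_congr_ae (Γ := Γ) (C := C) (Lp.coeFn_smul c φ),
      ae_memℓp_of_memLp hC (Lp.memLp φ)] with x h hφ
    rw [h, zakFun_smul c hφ]
    rfl
  norm_map' φ := by
    rw [LinearMap.coe_mk, AddHom.coe_mk, Lp.norm_toLp, Lp.norm_def,
      eLpNorm_zakFun hC (Lp.aestronglyMeasurable φ) (ae_memℓp_of_memLp hC (Lp.memLp φ))]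

theorem coeFn_zak (hC : IsFundamentalDomain Γ C μ) (φ : Lp E 2 μ) :
    zak 𝕜 hC φ =ᵐ[μ.restrict C] zakFun Γ φ :=
  MemLp.coeFn_toLp (memLp_zakFun hC (Lp.memLp φ))

theorem zak_apply_ae (hC : IsFundamentalDomain Γ C μ) (φ : Lp E 2 μ) (γ : Γ) :
    (fun x => zak 𝕜 hC φ x γ) =ᵐ[μ.restrict C] fun x => φ (γ⁻¹ • x) := by
  filter_upwards [coeFn_zak 𝕜 hC φ, ae_memℓp_of_memLp hC (Lp.memLp φ)] with x hx hℓ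
  rw [hx, coe_zakFun hℓ]

theorem zak_surjective (hC : IsFundamentalDomain Γ C μ) :
    Surjective (zak 𝕜 hC : Lp E 2 μ →ₗᵢ[𝕜] _) := by
  intro F
  -- `zakInv` needs genuinely disjoint translates, which `C` itself need not have.
  have hI : IsFundamentalDomain Γ (fundamentalInterior Γ C) μ := hC.fundamentalInterior
  have hdisj := pairwise_disjoint_fundamentalInterior Γ C
  have hIC : μ.restrict (fundamentalInterior Γ C) = μ.restrict C := by
    refine Measure.restrict_congr_set ?_
    rw [← sdiff_fundamentalFrontier]
    exact sdiff_null_ae_eq_self hC.measure_fundamentalFrontier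
  have hF : MemLp F 2 (μ.restrict (fundamentalInterior Γ C)) := by
    rw [hIC]
    exact Lp.memLp F
  have hf := memLp_zakInv hI hdisj hF
  have hI_mem : ∀ᵐ x ∂μ.restrict C, x ∈ fundamentalInterior Γ C := by
    rw [← hIC]
    exact ae_restrict_mem₀ hI.nullMeasurableSet
  refine ⟨hf.toLp _, Lp.ext ?_⟩
  filter_upwards [coeFn_zak 𝕜 hC (hf.toLp _), zakFun_congr_ae (Γ := Γ) (C := C) hf.coeFn_toLp,
    hI_mem] with x h₁ h₂ hx
  rw [h₁, h₂, zakFun_zakInv hdisj hx]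

noncomputable def zakEquiv (hC : IsFundamentalDomain Γ C μ) :
    Lp E 2 μ ≃ₗᵢ[𝕜] Lp (lp (fun _ : Γ => E) 2) 2 (μ.restrict C) :=
  LinearIsometryEquiv.ofSurjective (zak 𝕜 hC) (zak_surjective 𝕜 hC)

end Measure

end Zak

theorem stmt19_general (Γ : Type*) [Group Γ] [Countable Γ]
    (X : Type*) [MeasurableSpace X] (μ : Measure X)
    (act : Γ → X → X)
    (hmp : ∀ γ : Γ, MeasurePreserving (act γ) μ μ)
    (hact_mul : ∀ (γ γ' : Γ) (x : X), act γ (act γ' x) = act (γ * γ') x)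
    (hact_one : ∀ x : X, act 1 x = x)
    (C : Set X) (hC : MeasurableSet C)
    (hdisj : ∀ γ₁ γ₂ : Γ, γ₁ ≠ γ₂ → μ (act γ₁ '' C ∩ act γ₂ '' C) = 0)
    (hcover : μ (Set.univ \ ⋃ γ : Γ, act γ '' C) = 0) :
    ∃ Z : Lp ℂ 2 μ ≃ₗᵢ[ℂ] Lp (lp (fun _ : Γ => ℂ) 2) 2 (μ.restrict C),
      ∀ (φ : Lp ℂ 2 μ) (γ : Γ),
        (fun x : X => (Z φ : X → lp (fun _ : Γ => ℂ) 2) x γ)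
          =ᵐ[μ.restrict C] fun x => (φ : X → ℂ) (act γ⁻¹ x) := by
  let _ : MulAction Γ X :=
    { smul := act, one_smul := hact_one, mul_smul := fun γ γ' x => (hact_mul γ γ' x).symm }
  have _ : MeasurableConstSMul Γ X := ⟨fun γ => (hmp γ).measurable⟩
  have _ : SMulInvariantMeasure Γ X μ :=
    ⟨fun γ _ hs => (hmp γ).measure_preimage hs.nullMeasurableSet⟩
  have hcovers : ∀ᵐ x ∂μ, ∃ γ : Γ, γ • x ∈ C := by
    rw [← compl_eq_univ_sdiff] at hcover
    filter_upwards [mem_ae_iff.2 hcover] with x hx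
    obtain ⟨γ, y, hy, rfl⟩ := mem_iUnion.1 hx
    exact ⟨γ⁻¹, show γ⁻¹ • γ • y ∈ C by rwa [inv_smul_smul]⟩
  -- `γ • C` unfolds to `act γ '' C`, so `hdisj` is literally the a.e. disjointness field.
  have hfd : IsFundamentalDomain Γ C μ := ⟨hC.nullMeasurableSet, hcovers, hdisj⟩
  exact ⟨Zak.zakEquiv ℂ hfd, Zak.zak_apply_ae ℂ hfd⟩

/-- Let `σ = act` be a measurable measure-preserving action of a countable
discrete group `Γ` on a σ-finite measure space `(X, μ)` with the tiling property for a
measurable set `C` (the sets `σ_γ(C)` are pairwise essentially disjoint and cover `X` up to a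
null set). Then the Zak transform `Z[φ](x) = (φ(σ_{γ⁻¹}(x)))_{γ∈Γ}`, `x ∈ C`, is an isometric
isomorphism from `L²(X, μ)` onto `L²(C, ℓ²(Γ))`. -/
theorem stmt19 (Γ : Type*) [Group Γ] [Countable Γ]
    (X : Type*) [MeasurableSpace X] (μ : Measure X) [SigmaFinite μ]
    (act : Γ → X → X) (hactm : ∀ γ : Γ, Measurable (act γ))
    (hmp : ∀ γ : Γ, MeasurePreserving (act γ) μ μ)
    (hact_mul : ∀ (γ γ' : Γ) (x : X), act γ (act γ' x) = act (γ * γ') x)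
    (hact_one : ∀ x : X, act 1 x = x)
    (C : Set X) (hC : MeasurableSet C)
    (hdisj : ∀ γ₁ γ₂ : Γ, γ₁ ≠ γ₂ → μ (act γ₁ '' C ∩ act γ₂ '' C) = 0)
    (hcover : μ (Set.univ \ ⋃ γ : Γ, act γ '' C) = 0) :
    ∃ Z : Lp ℂ 2 μ ≃ₗᵢ[ℂ] Lp (lp (fun _ : Γ => ℂ) 2) 2 (μ.restrict C),
      ∀ (φ : Lp ℂ 2 μ) (γ : Γ),
        (fun x : X => (Z φ : X → lp (fun _ : Γ => ℂ) 2) x γ)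
          =ᵐ[μ.restrict C] fun x => (φ : X → ℂ) (act γ⁻¹ x) :=
  stmt19_general Γ X μ act hmp hact_mul hact_one C hC hdisj hcover
end
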